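/- Let (Y, 𝒴) be a measurable space, r : Y → ℝ a measurable reward with 0 ≤ r(y) ≤ 1 for all y, and let 0 < ε ≤ 3/4. For probability measures π, π_k, α on Y, the following policy-improvement lower bound holds: J(π) − J(π_k) ≥ L_α(π) − 2·((1 − σ_{α,ε})/σ_{α,ε})·TV(π, α) − 2·TV(π_k, α). -/

import Mathlib

open MeasureTheory

/-- Expected reward `J(m) = ∫ r dm`. -/
noncomputable def J {Y : Type*} [MeasurableSpace Y] (r : Y → ℝ) (m : Measure Y) : ℝ :=
  ∫ y, r y ∂m

/-- Variance `σ_m² = ∫ (r − μ_m)² dm` with `μ_m = J(m)`. -/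
noncomputable def rvar {Y : Type*} [MeasurableSpace Y] (r : Y → ℝ) (m : Measure Y) : ℝ :=
  ∫ y, (r y - J r m) ^ 2 ∂m

/-- Regularized standard deviation `σ_{m,ε} = sqrt(σ_m² + ε)`. -/
noncomputable def sigmaEps {Y : Type*} [MeasurableSpace Y] (r : Y → ℝ) (m : Measure Y)
    (ε : ℝ) : ℝ :=
  Real.sqrt (rvar r m + ε)

/-- Off-policy advantage objective `L_α(π) = (J(π) − μ_α)/σ_{α,ε}`. -/
noncomputable def Ladv {Y : Type*} [MeasurableSpace Y] (r : Y → ℝ) (α π : Measure Y)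
    (ε : ℝ) : ℝ :=
  (J r π - J r α) / sigmaEps r α ε

/-- Total variation distance `TV(m₁,m₂) = sup_{A measurable} |m₁(A) − m₂(A)|`. -/
noncomputable def tvDist {Y : Type*} [MeasurableSpace Y] (m₁ m₂ : Measure Y) : ℝ :=
  ⨆ A : {s : Set Y // MeasurableSet s}, |(m₁ A.1).toReal - (m₂ A.1).toReal|

/-! Write `J(π) - J(πₖ) = (J(π) - J(α)) + (J(α) - J(πₖ))`. By the layer-cake formula, the
integrals of a `[0, 1]`-valued reward against two probability measures are integrals over
`t ∈ (0, 1]` of the masses of the superlevel sets `{t ≤ r}`, so they differ by at most the total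
variation distance; this bounds the second term below by `-TV(πₖ, α)`. The first term is
`L_α(π) - ((1 - σ)/σ)(J(π) - J(α))`, and the correction is at most `((1 - σ)/σ) TV(π, α)` because
`σ ≤ 1`: by Popoviciu's inequality the variance of the reward is at most `1/4`, and `ε ≤ 3/4`. -/

open Set ProbabilityTheory

section TotalVariation

variable {Y : Type*} [MeasurableSpace Y] (m₁ m₂ : Measure Y)
  [IsProbabilityMeasure m₁] [IsProbabilityMeasure m₂]

lemma bddAbove_range_abs_measureReal_sub :
    BddAbove (range fun A : {s : Set Y // MeasurableSet s} => |m₁.real A.1 - m₂.real A.1|) :=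
  ⟨1, by
    rintro _ ⟨A, rfl⟩
    exact abs_sub_le_of_nonneg_of_le measureReal_nonneg measureReal_le_one
      measureReal_nonneg measureReal_le_one⟩

lemma abs_measureReal_sub_le_tvDist {A : Set Y} (hA : MeasurableSet A) :
    |m₁.real A - m₂.real A| ≤ tvDist m₁ m₂ :=
  le_ciSup (bddAbove_range_abs_measureReal_sub m₁ m₂) ⟨A, hA⟩

lemma tvDist_nonneg : 0 ≤ tvDist m₁ m₂ := by
  simpa using abs_measureReal_sub_le_tvDist m₁ m₂ MeasurableSet.empty

lemma integrableOn_measureReal_le_superlevel {f : Y → ℝ} (M : ℝ) :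
    IntegrableOn (fun t => m₁.real {y | t ≤ f y}) (Ioc 0 M) := by
  refine Measure.integrableOn_of_bounded (M := 1) measure_Ioc_lt_top.ne ?_
    (ae_of_all _ fun t => ?_)
  · exact (Measurable.ennreal_toReal (Antitone.measurable (f := fun t => m₁ {y | t ≤ f y})
      fun _ _ hst => measure_mono fun _ h => hst.trans h)).aestronglyMeasurable
  · rw [Real.norm_eq_abs, abs_of_nonneg measureReal_nonneg]
    exact measureReal_le_one

theorem abs_integral_sub_integral_le_mul_tvDist {f : Y → ℝ} (hf : Measurable f) {M : ℝ}
    (hfM : ∀ y, f y ∈ Icc 0 M) :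
    |∫ y, f y ∂m₁ - ∫ y, f y ∂m₂| ≤ M * tvDist m₁ m₂ := by
  obtain ⟨y₀⟩ := nonempty_of_isProbabilityMeasure m₁
  have hM : 0 ≤ M := (hfM y₀).1.trans (hfM y₀).2
  have hlayer (m : Measure Y) [IsProbabilityMeasure m] :
      ∫ y, f y ∂m = ∫ t in Ioc 0 M, m.real {y | t ≤ f y} :=
    have hint : Integrable f m := .of_bound hf.aestronglyMeasurable M
      (ae_of_all _ fun y => (Real.norm_of_nonneg (hfM y).1).le.trans (hfM y).2)
    hint.integral_eq_integral_Ioc_meas_le (ae_of_all _ fun y => (hfM y).1)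
      (ae_of_all _ fun y => (hfM y).2)
  rw [hlayer m₁, hlayer m₂, ← integral_sub (integrableOn_measureReal_le_superlevel m₁ M)
    (integrableOn_measureReal_le_superlevel m₂ M)]
  calc |∫ t in Ioc 0 M, (m₁.real {y | t ≤ f y} - m₂.real {y | t ≤ f y})|
      ≤ tvDist m₁ m₂ * volume.real (Ioc 0 M) := by
        rw [← Real.norm_eq_abs]
        exact norm_setIntegral_le_of_norm_le_const measure_Ioc_lt_top fun t _ =>
          abs_measureReal_sub_le_tvDist m₁ m₂ (measurableSet_le measurable_const hf)
    _ = M * tvDist m₁ m₂ := by simp [hM, mul_comm]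

end TotalVariation

section RegularizedStd

variable {Y : Type*} [MeasurableSpace Y] {r : Y → ℝ} {m : Measure Y} {ε : ℝ}

lemma sigmaEps_pos (hε : 0 < ε) : 0 < sigmaEps r m ε :=
  Real.sqrt_pos.2 (add_pos_of_nonneg_of_pos (integral_nonneg fun _ => sq_nonneg _) hε)

lemma sigmaEps_le_one [IsProbabilityMeasure m] (hr : Measurable r) (hr₀₁ : ∀ y, r y ∈ Icc 0 1)
    (hε : ε ≤ 3 / 4) : sigmaEps r m ε ≤ 1 := by
  have hvar := variance_le_sq_of_bounded (ae_of_all m hr₀₁) hr.aemeasurable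
  rw [variance_eq_integral hr.aemeasurable] at hvar
  change rvar r m ≤ ((1 - 0) / 2) ^ 2 at hvar
  exact Real.sqrt_le_one.2 (by linarith)

end RegularizedStd

/-- Off-policy GRPO policy-improvement lower bound. -/
theorem offpolicy_improvement {Y : Type*} [MeasurableSpace Y]
    (r : Y → ℝ) (hr_meas : Measurable r) (hr : ∀ y, 0 ≤ r y ∧ r y ≤ 1)
    (ε : ℝ) (hε : 0 < ε) (hε' : ε ≤ 3 / 4)
    (π πk α : Measure Y)
    [IsProbabilityMeasure π] [IsProbabilityMeasure πk] [IsProbabilityMeasure α] :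
    J r π - J r πk ≥
      Ladv r α π ε
        - 2 * ((1 - sigmaEps r α ε) / sigmaEps r α ε) * tvDist π α
        - 2 * tvDist πk α := by
  set σ := sigmaEps r α ε
  have hσ₀ : 0 < σ := sigmaEps_pos hε
  have hσ₁ : σ ≤ 1 := sigmaEps_le_one hr_meas hr hε'
  have hπ : |J r π - J r α| ≤ 1 * tvDist π α :=
    abs_integral_sub_integral_le_mul_tvDist π α hr_meas hr
  have hπk : |J r πk - J r α| ≤ 1 * tvDist πk α :=
    abs_integral_sub_integral_le_mul_tvDist πk α hr_meas hr
  have hc : 0 ≤ (1 - σ) / σ := div_nonneg (by linarith) hσ₀.le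
  have hLadv : Ladv r α π ε = (J r π - J r α) + (1 - σ) / σ * (J r π - J r α) := by
    change (J r π - J r α) / σ = _
    field_simp
    ring
  have hover : (1 - σ) / σ * (J r π - J r α) ≤ (1 - σ) / σ * tvDist π α :=
    mul_le_mul_of_nonneg_left (by linarith [le_abs_self (J r π - J r α)]) hc
  rw [hLadv]
  linarith [mul_nonneg hc (tvDist_nonneg π α), tvDist_nonneg πk α, le_abs_self (J r πk - J r α)]
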